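/- arXiv:1401.1466 — 2 statements merged into one kernel-verified Lean document; each statement's English description precedes it below -/
import Mathlib

section
/- (MacNeish's Theorem) If n = q_1 q_2 ⋯ q_t where q_1, …, q_t are powers of t distinct primes, then N(n) ≥ min{q_i − 1 : i = 1, …, t}. -/
/-- A latin square of order `n`: an `n × n` array with entries from an `n`-element
symbol set such that every row and every column contains each symbol exactly once. -/
def IsLatinSquare {n : ℕ} (L : Fin n → Fin n → Fin n) : Prop :=
  (∀ i, Function.Bijective fun j => L i j) ∧ (∀ j, Function.Bijective fun i => L i j)

/-- Two latin squares of order `n` are orthogonal if the `n²` superimposed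
ordered pairs of entries are all distinct. -/
def AreOrthogonal {n : ℕ} (L M : Fin n → Fin n → Fin n) : Prop :=
  Function.Injective fun p : Fin n × Fin n => (L p.1 p.2, M p.1 p.2)

/-- There exist `r` mutually orthogonal latin squares (MOLS) of order `n`. -/
def HasMOLS (n r : ℕ) : Prop :=
  ∃ L : Fin r → Fin n → Fin n → Fin n,
    (∀ s, IsLatinSquare (L s)) ∧ ∀ s t : Fin r, s ≠ t → AreOrthogonal (L s) (L t)

/-- `molsNum n` is `N(n)`, the maximum size of a set of MOLS of order `n`. -/
noncomputable def molsNum (n : ℕ) : ℕ := sSup {r | HasMOLS n r}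

section Aux

/-- Latin square condition on an arbitrary type. -/
def LatinOn {α : Type*} (L : α → α → α) : Prop :=
  (∀ i, Function.Bijective fun j => L i j) ∧ (∀ j, Function.Bijective fun i => L i j)

def OrthoOn {α : Type*} (L M : α → α → α) : Prop :=
  Function.Injective fun p : α × α => (L p.1 p.2, M p.1 p.2)

def MOLSOn (α : Type*) (r : ℕ) : Prop :=
  ∃ L : Fin r → α → α → α, (∀ s, LatinOn (L s)) ∧ ∀ s t : Fin r, s ≠ t → OrthoOn (L s) (L t)

lemma hasMOLS_iff_molsOn (n r : ℕ) : HasMOLS n r ↔ MOLSOn (Fin n) r := Iff.rfl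

lemma MOLSOn.congr {α β : Type*} (E : α ≃ β) {r : ℕ} (h : MOLSOn α r) : MOLSOn β r := by
  obtain ⟨L, hL, hO⟩ := h
  refine ⟨fun s x y => E (L s (E.symm x) (E.symm y)), fun s => ⟨?_, ?_⟩, ?_⟩
  · intro x
    exact (E.symm.trans ((Equiv.ofBijective _ ((hL s).1 (E.symm x))).trans E)).bijective
  · intro y
    exact (E.symm.trans ((Equiv.ofBijective _ ((hL s).2 (E.symm y))).trans E)).bijective
  · intro s t hst a b hab
    simp only [Prod.mk.injEq, EmbeddingLike.apply_eq_iff_eq] at hab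
    have := hO s t hst (a₁ := (E.symm a.1, E.symm a.2)) (a₂ := (E.symm b.1, E.symm b.2))
      (by simpa [Prod.ext_iff] using hab)
    simp only [Prod.ext_iff] at this ⊢
    exact ⟨E.symm.injective this.1, E.symm.injective this.2⟩

lemma MOLSOn.mono {α : Type*} {r r' : ℕ} (h : MOLSOn α r) (hr : r' ≤ r) : MOLSOn α r' := by
  obtain ⟨L, hL, hO⟩ := h
  exact ⟨fun s => L (Fin.castLE hr s), fun s => hL _,
    fun s t hst => hO _ _ (fun hc => hst (Fin.castLE_injective hr hc))⟩

lemma molsOn_field (F : Type*) [Field F] [Fintype F] [DecidableEq F] :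
    MOLSOn F (Fintype.card F - 1) := by
  have hcard : Fintype.card Fˣ = Fintype.card F - 1 := Fintype.card_units F
  let u : Fin (Fintype.card F - 1) ≃ Fˣ := (Fintype.equivFinOfCardEq hcard).symm
  refine ⟨fun s x y => (u s : F) * x + y, fun s => ⟨?_, ?_⟩, ?_⟩
  · intro x
    exact (Equiv.addLeft ((u s : F) * x)).bijective
  · intro y
    exact ((Equiv.mulLeft₀ (u s : F) (Units.ne_zero _)).trans (Equiv.addRight y)).bijective
  · intro s t hst a b hab
    simp only [Prod.mk.injEq] at hab
    obtain ⟨h1, h2⟩ := hab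
    have hx : a.1 = b.1 := by
      have hsub : ((u s : F) - (u t : F)) * a.1 = ((u s : F) - (u t : F)) * b.1 := by
        linear_combination h1 - h2
      have hne : ((u s : F) - (u t : F)) ≠ 0 := by
        intro hc
        apply hst
        apply u.injective
        exact Units.ext (sub_eq_zero.mp hc)
      exact mul_left_cancel₀ hne hsub
    have hy : a.2 = b.2 := by
      rw [hx] at h1
      exact add_left_cancel h1
    exact Prod.ext hx hy

lemma molsOn_pi {ι : Type*} [Fintype ι] {β : ι → Type*} {r : ℕ}
    (h : ∀ i, MOLSOn (β i) r) : MOLSOn (∀ i, β i) r := by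
  choose L hL hO using h
  refine ⟨fun s x y i => L i s (x i) (y i), fun s => ⟨?_, ?_⟩, ?_⟩
  · intro x
    exact (Equiv.piCongrRight fun i => Equiv.ofBijective _ ((hL i s).1 (x i))).bijective
  · intro y
    exact (Equiv.piCongrRight fun i => Equiv.ofBijective _ ((hL i s).2 (y i))).bijective
  · intro s t hst a b hab
    simp only [Prod.mk.injEq] at hab
    have h1 := congrFun hab.1
    have h2 := congrFun hab.2
    have key : ∀ i, a.1 i = b.1 i ∧ a.2 i = b.2 i := by
      intro i
      have := hO i s t hst (a₁ := (a.1 i, a.2 i)) (a₂ := (b.1 i, b.2 i))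
        (by simp [Prod.ext_iff, h1 i, h2 i])
      simpa [Prod.ext_iff] using this
    exact Prod.ext (funext fun i => (key i).1) (funext fun i => (key i).2)

lemma hasMOLS_bound {n r : ℕ} (hn : 2 ≤ n) (h : HasMOLS n r) : r ≤ n - 1 := by
  haveI : NeZero n := ⟨by omega⟩
  obtain ⟨L, hL, hO⟩ := h
  have h10 : (1 : Fin n) ≠ 0 := by
    simp [Fin.ext_iff, Fin.val_one', Nat.mod_eq_of_lt (show 1 < n by omega)]
  set f : Fin r → Fin n :=
    fun s => (Equiv.ofBijective (fun j => L s 0 j) ((hL s).1 0)).symm (L s 1 0) with hf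
  have hfe : ∀ s, L s 0 (f s) = L s 1 0 := fun s =>
    (Equiv.ofBijective (fun j => L s 0 j) ((hL s).1 0)).apply_symm_apply (L s 1 0)
  have hne : ∀ s, f s ≠ 0 := by
    intro s hc
    have h00 : L s 0 0 = L s 1 0 := by have := hfe s; rw [hc] at this; exact this
    exact h10 (((hL s).2 0).injective h00.symm)
  have hinj : Function.Injective f := by
    intro s t hst
    by_contra hne'
    have := hO s t hne' (a₁ := ((1 : Fin n), (0 : Fin n))) (a₂ := ((0 : Fin n), f s))
      (by simp only [Prod.mk.injEq]; exact ⟨(hfe s).symm, by rw [hst]; exact (hfe t).symm⟩)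
    simp only [Prod.mk.injEq] at this
    exact h10 this.1
  have : Fintype.card (Fin r) ≤ Fintype.card {x : Fin n // x ≠ 0} :=
    Fintype.card_le_of_injective (fun s => ⟨f s, hne s⟩)
      (fun s t hst => hinj (by simpa using congrArg Subtype.val hst))
  simpa [Fintype.card_subtype_compl] using this

end Aux

/-- MacNeish's theorem: if `n = q 0 * q 1 * ⋯ * q (t-1)` where the `q i` are powers of `t`
distinct primes, then `N(n) ≥ min {q i - 1 : i}`. -/
theorem macneish (t : ℕ) (ht : 0 < t) (q p e : Fin t → ℕ)
    (hp : ∀ i, (p i).Prime) (he : ∀ i, 1 ≤ e i) (hq : ∀ i, q i = p i ^ e i)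
    (hdistinct : Function.Injective p) (n : ℕ) (hn : n = ∏ i, q i) :
    (⨅ i, (q i - 1)) ≤ molsNum n := by
  set r := ⨅ i, (q i - 1) with hr
  have hq2 : ∀ i, 2 ≤ q i := by
    intro i
    rw [hq i]
    calc 2 ≤ p i := (hp i).two_le
    _ ≤ p i ^ e i := Nat.le_self_pow (by have := he i; omega) _
  -- each factor has MOLS
  have hfac : ∀ i, MOLSOn (Fin (q i)) r := by
    intro i
    haveI : Fact (p i).Prime := ⟨hp i⟩
    haveI : Fintype (GaloisField (p i) (e i)) := Fintype.ofFinite _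
    haveI : DecidableEq (GaloisField (p i) (e i)) := Classical.decEq _
    have hF : MOLSOn (GaloisField (p i) (e i)) (Fintype.card (GaloisField (p i) (e i)) - 1) :=
      molsOn_field _
    have hcard : Fintype.card (GaloisField (p i) (e i)) = q i := by
      rw [← Nat.card_eq_fintype_card,
        GaloisField.card (p i) (e i) (by have := he i; omega), hq i]
    rw [hcard] at hF
    have : MOLSOn (Fin (q i)) (q i - 1) := hF.congr (Fintype.equivFinOfCardEq hcard)
    exact this.mono (ciInf_le (OrderBot.bddBelow _) i)
  have hpi : MOLSOn (∀ i, Fin (q i)) r := molsOn_pi hfac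
  have hcardpi : Fintype.card (∀ i : Fin t, Fin (q i)) = n := by
    rw [Fintype.card_pi, hn]
    simp
  have hmols : HasMOLS n r := (hasMOLS_iff_molsOn n r).mpr
    (hpi.congr (Fintype.equivFinOfCardEq hcardpi))
  have hn2 : 2 ≤ n := by
    have i0 : Fin t := ⟨0, ht⟩
    have hd : q i0 ∣ n := hn ▸ Finset.dvd_prod_of_mem q (Finset.mem_univ i0)
    have hnpos : 0 < n := by
      rw [hn]
      exact Finset.prod_pos fun i _ => by have := hq2 i; omega
    calc 2 ≤ q i0 := hq2 i0
    _ ≤ n := Nat.le_of_dvd hnpos hd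
  exact le_csSup ⟨n - 1, fun x hx => hasMOLS_bound hn2 hx⟩ hmols
end

section
/- (Rees's product construction) Let Σ = [σ_1, …, σ_t] be a list of positive integers summing to n. Suppose there exists a Σ-resolvable TD(k,n), and a TD(k,m) whose groups are each identified with a fixed finite group G of order m, admitting for each i = 1, …, t a (σ_i, γ_i)-group partition. Then there exists a Γ-resolvable TD(k, mn), where Γ is the list consisting of mσ_i/γ_i copies of γ_i for each i = 1, …, t. -/
/-- A family of blocks (indexed by `ι`, each block recorded as its unique point in each of the
`k` groups, the groups being copies of `α`) forms a transversal design: any two points from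
distinct groups lie together in exactly one block. -/
def IsTD {α ι : Type*} (k : ℕ) (B : ι → Fin k → α) : Prop :=
  ∀ i j : Fin k, i ≠ j → ∀ x y : α, ∃! b : ι, B b i = x ∧ B b j = y

/-- There exists a transversal design `TD(k,n)`: `kn` points in `k` groups of size `n`,
with `n²` blocks, each block meeting every group exactly once, such that any two points
from distinct groups lie together in exactly one block. -/
def TDExists (k n : ℕ) : Prop :=
  ∃ B : Fin (n ^ 2) → Fin k → Fin n, IsTD k B

/-- `c` assigns each block of `B` to a class, and for each class index `s` the corresponding
class is a `σ s`-parallel class: it covers every point exactly `σ s` times. -/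
def IsResolution {α ι τ : Type*} {k : ℕ} (B : ι → Fin k → α) (σ : τ → ℕ) (c : ι → τ) : Prop :=
  ∀ (s : τ) (i : Fin k) (x : α), Nat.card {b : ι // c b = s ∧ B b i = x} = σ s

/-- There exists a resolvable transversal design `RTD(k,n)`: a `TD(k,n)` whose blocks
partition into `n` parallel classes. -/
def RTDExists (k n : ℕ) : Prop :=
  ∃ (B : Fin (n ^ 2) → Fin k → Fin n) (c : Fin (n ^ 2) → Fin n),
    IsTD k B ∧ IsResolution B (fun _ => 1) c

/-- A `TD(k, |G|)` whose groups are each identified with the finite group `G` (its blocks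
`B`, indexed by `ι`, record in each coordinate an element of `G`) admits a
`(σ, γ)`-group partition: there are a subset `H ⊆ G` with `|H| = σ` and a partition of the
block set (given by a surjective class map `p : ι → κ`) such that for every class, the
collection of all translates `h • B` (`h ∈ H`, `B` in the class, acting coordinatewise by
left multiplication) is a `γ`-parallel class, i.e. it covers every point exactly `γ` times
(counted with multiplicity over the pairs `(h, B)`). -/
def HasGroupPartition {G : Type*} [Group G] {ι : Type*} (k : ℕ)
    (B : ι → Fin k → G) (σ γ : ℕ) : Prop :=
  ∃ (H : Finset G) (κ : Type) (p : ι → κ),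
    H.card = σ ∧ Function.Surjective p ∧
      ∀ (cl : κ) (i : Fin k) (x : G),
        Nat.card {hb : G × ι // hb.1 ∈ H ∧ p hb.2 = cl ∧ hb.1 * B hb.2 i = x} = γ

lemma isTD_of_equiv {α β ι ι' : Type*} {k : ℕ} (e1 : ι' ≃ ι) (e2 : α ≃ β)
    {B : ι → Fin k → α} (h : IsTD k B) :
    IsTD k (fun q i => e2 (B (e1 q) i)) := by
  intro i j hij x y
  obtain ⟨b, ⟨hb1, hb2⟩, hu⟩ := h i j hij (e2.symm x) (e2.symm y)
  refine ⟨e1.symm b, ⟨?_, ?_⟩, ?_⟩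
  · simp [hb1]
  · simp [hb2]
  · rintro q ⟨h1, h2⟩
    have hq : e1 q = b := hu (e1 q)
      ⟨by rw [← h1, Equiv.symm_apply_apply], by rw [← h2, Equiv.symm_apply_apply]⟩
    rw [← hq, Equiv.symm_apply_apply]

lemma isResolution_of_equiv {α β ι ι' τ : Type*} {k : ℕ} (e1 : ι' ≃ ι) (e2 : α ≃ β)
    {B : ι → Fin k → α} {w : τ → ℕ} {c : ι → τ} (h : IsResolution B w c) :
    IsResolution (fun q i => e2 (B (e1 q) i)) w (fun q => c (e1 q)) := by
  intro s i x
  rw [← h s i (e2.symm x)]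
  refine Nat.card_congr (Equiv.subtypeEquiv e1 (fun q => ?_))
  refine and_congr_right fun _ => ?_
  show e2 (B (e1 q) i) = x ↔ B (e1 q) i = e2.symm x
  exact ⟨fun h2 => by rw [← h2, Equiv.symm_apply_apply],
    fun h2 => by rw [h2, Equiv.apply_symm_apply]⟩

lemma exists_labels {n t k : ℕ} {σ : Fin t → ℕ} {G : Type*}
    (B₁ : Fin (n^2) → Fin k → Fin n) (c₁ : Fin (n^2) → Fin t)
    (hres : IsResolution B₁ σ c₁) (H : Fin t → Finset G) (hH : ∀ s, (H s).card = σ s) :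
    ∃ f : Fin (n^2) → Fin k → G, (∀ b i, f b i ∈ H (c₁ b)) ∧
      ∀ (s : Fin t) (i : Fin k) (u : Fin n) (h : G), h ∈ H s →
        ∃! b : Fin (n^2), c₁ b = s ∧ B₁ b i = u ∧ f b i = h := by
  classical
  have hE : ∀ (s : Fin t) (i : Fin k) (u : Fin n),
      Nonempty ({b : Fin (n^2) // c₁ b = s ∧ B₁ b i = u} ≃ {h : G // h ∈ H s}) := by
    intro s i u
    refine ⟨(Finite.equivFinOfCardEq (hres s i u)).trans
      (Finite.equivFinOfCardEq ?_).symm⟩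
    rw [show {h : G // h ∈ H s} = ((H s : Finset G) : Type _) from rfl]
    rw [Nat.card_eq_finsetCard]
    exact hH s
  have E := fun s i u => (hE s i u).some
  refine ⟨fun b i => (E (c₁ b) i (B₁ b i) ⟨b, rfl, rfl⟩ : G),
    fun b i => (E (c₁ b) i (B₁ b i) ⟨b, rfl, rfl⟩).2, ?_⟩
  have fval : ∀ (s : Fin t) (i : Fin k) (u : Fin n) (b : Fin (n^2))
      (h1 : c₁ b = s) (h2 : B₁ b i = u),
      (E (c₁ b) i (B₁ b i) ⟨b, rfl, rfl⟩ : G) = (E s i u ⟨b, h1, h2⟩ : G) := by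
    intro s i u b h1 h2
    subst h1; subst h2; rfl
  intro s i u h hh
  refine ⟨((E s i u).symm ⟨h, hh⟩ : _), ⟨((E s i u).symm ⟨h, hh⟩).2.1,
    ((E s i u).symm ⟨h, hh⟩).2.2, ?_⟩, ?_⟩
  · show (E (c₁ _) i (B₁ _ i) ⟨_, rfl, rfl⟩ : G) = h
    rw [fval s i u _ ((E s i u).symm ⟨h, hh⟩).2.1 ((E s i u).symm ⟨h, hh⟩).2.2]
    have heta : (⟨((E s i u).symm ⟨h, hh⟩ : _), ((E s i u).symm ⟨h, hh⟩).2.1,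
        ((E s i u).symm ⟨h, hh⟩).2.2⟩ : {b : Fin (n^2) // c₁ b = s ∧ B₁ b i = u})
        = (E s i u).symm ⟨h, hh⟩ := Subtype.ext rfl
    rw [heta, Equiv.apply_symm_apply]
  · rintro b' ⟨g1, g2, g3⟩
    have g3' : (E (c₁ b') i (B₁ b' i) ⟨b', rfl, rfl⟩ : G) = h := g3
    have h3 : (E s i u ⟨b', g1, g2⟩ : G) = h := (fval s i u b' g1 g2).symm.trans g3'
    have h4 : E s i u ⟨b', g1, g2⟩ = ⟨h, hh⟩ := Subtype.ext h3
    have h5 : (⟨b', g1, g2⟩ : {b : Fin (n^2) // c₁ b = s ∧ B₁ b i = u})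
        = (E s i u).symm ⟨h, hh⟩ := by rw [← h4, Equiv.symm_apply_apply]
    exact congrArg Subtype.val h5


/-- Rees's product construction: given a `Σ`-resolvable `TD(k,n)` (with
`Σ = [σ 0, …, σ (t-1)]` a list of positive integers summing to `n`) and a `TD(k,m)` whose
groups are identified with a fixed finite group `G` of order `m` and which admits a
`(σ i, γ i)`-group partition for each `i`, there exists a `Γ`-resolvable `TD(k, mn)`,
where `Γ` consists of `m * σ i / γ i` copies of `γ i` for each `i`. -/
theorem rees_product (k m n t : ℕ) (σ γ : Fin t → ℕ)
    (hσ : ∀ i, 0 < σ i) (hsum : ∑ i, σ i = n) (hdvd : ∀ i, γ i ∣ m * σ i)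
    (G : Type) [Group G] [Fintype G] (hG : Fintype.card G = m)
    (hn : ∃ (B : Fin (n ^ 2) → Fin k → Fin n) (c : Fin (n ^ 2) → Fin t),
      IsTD k B ∧ IsResolution B σ c)
    (hm : ∃ B₂ : Fin (m ^ 2) → Fin k → G,
      IsTD k B₂ ∧ ∀ i : Fin t, HasGroupPartition k B₂ (σ i) (γ i)) :
    ∃ (B : Fin ((m * n) ^ 2) → Fin k → Fin (m * n))
      (c : Fin ((m * n) ^ 2) → (i : Fin t) × Fin (m * σ i / γ i)),
      IsTD k B ∧ IsResolution B (fun s => γ s.1) c := by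
  classical
  rcases Nat.eq_zero_or_pos m with hm0 | hmpos
  · refine ⟨fun q _ => (Fin.cast (by simp [hm0]) q).elim0,
      fun q => (Fin.cast (by simp [hm0]) q).elim0, ?_, ?_⟩
    · intro i j hij x y
      exact (Fin.cast (show m * n = 0 by simp [hm0]) x).elim0
    · intro s i x
      exact (Fin.cast (show m * σ s.1 / γ s.1 = 0 by simp [hm0]) s.2).elim0
  rcases Nat.eq_zero_or_pos n with hn0 | hnpos
  · have ht0 : t = 0 := by
      rcases Nat.eq_zero_or_pos t with h | h
      · exact h
      · exfalso
        have hpos : 0 < ∑ i, σ i :=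
          Finset.sum_pos (fun i _ => hσ i) ⟨⟨0, h⟩, Finset.mem_univ _⟩
        omega
    refine ⟨fun q _ => (Fin.cast (by simp [hn0]) q).elim0,
      fun q => (Fin.cast (by simp [hn0]) q).elim0, ?_, ?_⟩
    · intro i j hij x y
      exact (Fin.cast (show m * n = 0 by simp [hn0]) x).elim0
    · intro s i x
      exact (Fin.cast ht0 s.1).elim0
  have htpos : 0 < t := by
    rcases Nat.eq_zero_or_pos t with h | h
    · exfalso; subst h; simp at hsum; omega
    · exact h
  rcases Nat.eq_zero_or_pos k with hk0 | hkpos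
  · set i0 : Fin t := ⟨0, htpos⟩
    have hγ0 : 0 < γ i0 := by
      rcases Nat.eq_zero_or_pos (γ i0) with h | h
      · exfalso
        have h2 := Nat.eq_zero_of_zero_dvd (h ▸ hdvd i0)
        have h3 : 0 < m * σ i0 := Nat.mul_pos hmpos (hσ i0)
        omega
      · exact h
    have hj : 0 < m * σ i0 / γ i0 :=
      Nat.div_pos (Nat.le_of_dvd (Nat.mul_pos hmpos (hσ i0)) (hdvd i0)) hγ0
    refine ⟨fun _ i => (Fin.cast hk0 i).elim0, fun _ => ⟨i0, ⟨0, hj⟩⟩, ?_, ?_⟩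
    · intro i j hij x y
      exact (Fin.cast hk0 i).elim0
    · intro s i x
      exact (Fin.cast hk0 i).elim0
  -- main case
  obtain ⟨B₁, c₁, htd₁, hres₁⟩ := hn
  obtain ⟨B₂, htd₂, hgp⟩ := hm
  simp only [HasGroupPartition] at hgp
  choose H κ p hHcard hpsurj hcount using hgp
  obtain ⟨f, fmem, flabel⟩ := exists_labels B₁ c₁ hres₁ H hHcard
  set i0 : Fin k := ⟨0, hkpos⟩ with hi0
  have hfiber : ∀ (s : Fin t) (cl : κ s),
      σ s * Nat.card {a : Fin (m ^ 2) // p s a = cl} = m * γ s := by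
    intro s cl
    have h1 : Nat.card {hb : G × Fin (m ^ 2) // hb.1 ∈ H s ∧ p s hb.2 = cl}
        = σ s * Nat.card {a : Fin (m ^ 2) // p s a = cl} := by
      rw [Nat.card_congr (Equiv.subtypeProdEquivProd
        (p := fun h : G => h ∈ H s) (q := fun a : Fin (m ^ 2) => p s a = cl)),
        Nat.card_prod]
      congr 1
      rw [Nat.card_eq_finsetCard]
      exact hHcard s
    have h2 : Nat.card {hb : G × Fin (m ^ 2) // hb.1 ∈ H s ∧ p s hb.2 = cl}
        = m * γ s := by
      rw [Nat.card_congr (Equiv.sigmaFiberEquiv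
        (fun z : {hb : G × Fin (m ^ 2) // hb.1 ∈ H s ∧ p s hb.2 = cl} =>
          z.1.1 * B₂ z.1.2 i0)).symm]
      rw [Nat.card_eq_fintype_card, Fintype.card_sigma]
      have hx : ∀ x : G, Fintype.card
          {z : {hb : G × Fin (m ^ 2) // hb.1 ∈ H s ∧ p s hb.2 = cl} //
            z.1.1 * B₂ z.1.2 i0 = x} = γ s := by
        intro x
        rw [← Nat.card_eq_fintype_card]
        have e5 : {z : {hb : G × Fin (m ^ 2) // hb.1 ∈ H s ∧ p s hb.2 = cl} //
            z.1.1 * B₂ z.1.2 i0 = x} ≃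
            {hb : G × Fin (m ^ 2) // (hb.1 ∈ H s ∧ p s hb.2 = cl) ∧
              hb.1 * B₂ hb.2 i0 = x} :=
          Equiv.subtypeSubtypeEquivSubtypeInter
            (fun hb : G × Fin (m ^ 2) => hb.1 ∈ H s ∧ p s hb.2 = cl)
            (fun hb => hb.1 * B₂ hb.2 i0 = x)
        have e6 : {hb : G × Fin (m ^ 2) // (hb.1 ∈ H s ∧ p s hb.2 = cl) ∧
            hb.1 * B₂ hb.2 i0 = x} ≃
            {hb : G × Fin (m ^ 2) // hb.1 ∈ H s ∧ p s hb.2 = cl ∧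
              hb.1 * B₂ hb.2 i0 = x} :=
          Equiv.subtypeEquivRight (fun hb => and_assoc)
        exact (Nat.card_congr (e5.trans e6)).trans (hcount s cl i0 x)
      simp_rw [hx]
      rw [Finset.sum_const, Finset.card_univ, hG, smul_eq_mul]
    rw [← h1, h2]
  have hγpos : ∀ s, 0 < γ s := by
    intro s
    have hm2 : 0 < m ^ 2 := by positivity
    have hpos : 0 < Nat.card {a : Fin (m ^ 2) // p s a = p s ⟨0, hm2⟩} := by
      have : Nonempty {a : Fin (m ^ 2) // p s a = p s ⟨0, hm2⟩} := ⟨⟨⟨0, hm2⟩, rfl⟩⟩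
      exact Nat.card_pos
    have h2 : 0 < σ s * Nat.card {a : Fin (m ^ 2) // p s a = p s ⟨0, hm2⟩} :=
      Nat.mul_pos (hσ s) hpos
    rw [hfiber s (p s ⟨0, hm2⟩)] at h2
    exact Nat.pos_of_ne_zero fun h => by simp [h] at h2
  have hκcard : ∀ s, Nat.card (κ s) = m * σ s / γ s := by
    intro s
    haveI : Finite (κ s) := Finite.of_surjective _ (hpsurj s)
    letI : Fintype (κ s) := Fintype.ofFinite (κ s)
    have h3 : m ^ 2 = ∑ cl : κ s, Nat.card {a : Fin (m ^ 2) // p s a = cl} := by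
      calc m ^ 2 = Nat.card (Fin (m ^ 2)) := by simp
        _ = Nat.card (Σ cl : κ s, {a : Fin (m ^ 2) // p s a = cl}) :=
            Nat.card_congr (Equiv.sigmaFiberEquiv (p s)).symm
        _ = ∑ cl : κ s, Nat.card {a : Fin (m ^ 2) // p s a = cl} := by
            rw [Nat.card_eq_fintype_card, Fintype.card_sigma]
            exact Finset.sum_congr rfl fun cl _ => Nat.card_eq_fintype_card.symm
    have h4 : σ s * m ^ 2 = Nat.card (κ s) * γ s * m := by
      rw [h3, Finset.mul_sum]
      calc ∑ cl : κ s, σ s * Nat.card {a : Fin (m ^ 2) // p s a = cl}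
          = ∑ _cl : κ s, m * γ s := Finset.sum_congr rfl fun cl _ => hfiber s cl
        _ = Fintype.card (κ s) * (m * γ s) := by
            rw [Finset.sum_const, Finset.card_univ, smul_eq_mul]
        _ = Nat.card (κ s) * γ s * m := by rw [Nat.card_eq_fintype_card]; ring
    have h5 : Nat.card (κ s) * γ s = σ s * m := by
      have h6 : σ s * m ^ 2 = σ s * m * m := by ring
      rw [h6] at h4
      exact (Nat.eq_of_mul_eq_mul_right hmpos h4).symm
    rw [show m * σ s = Nat.card (κ s) * γ s from by rw [h5]; ring,
      Nat.mul_div_cancel _ (hγpos s)]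
  have eκ : ∀ s, κ s ≃ Fin (m * σ s / γ s) := fun s =>
    haveI : Finite (κ s) := Finite.of_surjective _ (hpsurj s)
    Finite.equivFinOfCardEq (hκcard s)
  have sigma_eq : ∀ (s' s : Fin t) (_ : s' = s) (j : Fin (m * σ s / γ s))
      (j' : Fin (m * σ s' / γ s')), (j' : ℕ) = (j : ℕ) →
      (⟨s', j'⟩ : Σ v : Fin t, Fin (m * σ v / γ v)) = ⟨s, j⟩ := by
    intro s' s h j j' hval
    subst h
    have : j' = j := Fin.ext hval
    rw [this]
  have sigma_eq' : ∀ (s' s : Fin t) (j : Fin (m * σ s / γ s))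
      (j' : Fin (m * σ s' / γ s')),
      (⟨s', j'⟩ : Σ v : Fin t, Fin (m * σ v / γ v)) = ⟨s, j⟩ →
      s' = s ∧ (j' : ℕ) = (j : ℕ) := by
    intro s' s j j' h
    rw [Sigma.mk.inj_iff] at h
    obtain ⟨h1, h2⟩ := h
    subst h1
    exact ⟨rfl, by rw [eq_of_heq h2]⟩
  have htd : IsTD k (fun (ab : Fin (m ^ 2) × Fin (n ^ 2)) (i : Fin k) =>
      ((f ab.2 i * B₂ ab.1 i, B₁ ab.2 i) : G × Fin n)) := by
    intro i j hij x y
    obtain ⟨b, ⟨hbi, hbj⟩, hbu⟩ := htd₁ i j hij x.2 y.2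
    obtain ⟨a, ⟨hai, haj⟩, hau⟩ := htd₂ i j hij ((f b i)⁻¹ * x.1) ((f b j)⁻¹ * y.1)
    refine ⟨(a, b), ⟨?_, ?_⟩, ?_⟩
    · show (f b i * B₂ a i, B₁ b i) = x
      rw [hai, hbi, mul_inv_cancel_left]
    · show (f b j * B₂ a j, B₁ b j) = y
      rw [haj, hbj, mul_inv_cancel_left]
    · rintro ⟨a', b'⟩ ⟨h1, h2⟩
      have h1' : (f b' i * B₂ a' i, B₁ b' i) = x := h1
      have h2' : (f b' j * B₂ a' j, B₁ b' j) = y := h2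
      have hb' : b' = b := hbu b' ⟨congrArg Prod.snd h1', congrArg Prod.snd h2'⟩
      subst hb'
      have ha' : a' = a := hau a'
        ⟨by rw [eq_inv_mul_iff_mul_eq]; exact congrArg Prod.fst h1',
         by rw [eq_inv_mul_iff_mul_eq]; exact congrArg Prod.fst h2'⟩
      rw [ha']
  have hres : IsResolution (fun (ab : Fin (m ^ 2) × Fin (n ^ 2)) (i : Fin k) =>
      ((f ab.2 i * B₂ ab.1 i, B₁ ab.2 i) : G × Fin n)) (fun s => γ s.1)
      (fun ab => (⟨c₁ ab.2, eκ (c₁ ab.2) (p (c₁ ab.2) ab.1)⟩ :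
        Σ v : Fin t, Fin (m * σ v / γ v))) := by
    rintro ⟨s, j⟩ i x
    show Nat.card _ = γ s
    rw [← hcount s ((eκ s).symm j) i x.1]
    have hex : ∀ z : {hb : G × Fin (m ^ 2) //
        hb.1 ∈ H s ∧ p s hb.2 = (eκ s).symm j ∧ hb.1 * B₂ hb.2 i = x.1},
        ∃ b : Fin (n ^ 2), c₁ b = s ∧ B₁ b i = x.2 ∧ f b i = z.1.1 :=
      fun z => (flabel s i x.2 z.1.1 z.2.1).exists
    choose bf hbf1 hbf2 hbf3 using hex
    have hΦ : ∀ z : {hb : G × Fin (m ^ 2) //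
        hb.1 ∈ H s ∧ p s hb.2 = (eκ s).symm j ∧ hb.1 * B₂ hb.2 i = x.1},
        ((⟨c₁ (z.1.2, bf z).2, eκ (c₁ (z.1.2, bf z).2) (p (c₁ (z.1.2, bf z).2)
          (z.1.2, bf z).1)⟩ : Σ v : Fin t, Fin (m * σ v / γ v)) = ⟨s, j⟩) ∧
        (f (z.1.2, bf z).2 i * B₂ (z.1.2, bf z).1 i, B₁ (z.1.2, bf z).2 i) = x := by
      intro z
      constructor
      · refine sigma_eq _ _ (hbf1 z) j _ ?_
        rw [show (eκ (c₁ (bf z)) ((p (c₁ (bf z))) z.1.2) : ℕ)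
            = (eκ s (p s z.1.2) : ℕ) from by rw [hbf1 z]]
        rw [z.2.2.1, Equiv.apply_symm_apply]
      · show (f (bf z) i * B₂ z.1.2 i, B₁ (bf z) i) = x
        rw [hbf3 z, hbf2 z, z.2.2.2]
    let Φ : {hb : G × Fin (m ^ 2) //
        hb.1 ∈ H s ∧ p s hb.2 = (eκ s).symm j ∧ hb.1 * B₂ hb.2 i = x.1} →
        {ab : Fin (m ^ 2) × Fin (n ^ 2) //
          ((⟨c₁ ab.2, eκ (c₁ ab.2) (p (c₁ ab.2) ab.1)⟩ :
            Σ v : Fin t, Fin (m * σ v / γ v)) = ⟨s, j⟩) ∧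
          (f ab.2 i * B₂ ab.1 i, B₁ ab.2 i) = x} :=
      fun z => ⟨(z.1.2, bf z), hΦ z⟩
    have hinj : Function.Injective Φ := by
      intro z z' hzz
      have hpair : (z.1.2, bf z) = (z'.1.2, bf z') := congrArg Subtype.val hzz
      have ha : z.1.2 = z'.1.2 := congrArg Prod.fst hpair
      have hb : bf z = bf z' := congrArg Prod.snd hpair
      have hh : z.1.1 = z'.1.1 := by rw [← hbf3 z, ← hbf3 z', hb]
      refine Subtype.ext ?_
      rw [Prod.ext_iff]
      exact ⟨hh, ha⟩
    have hsurj2 : Function.Surjective Φ := by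
      rintro ⟨⟨a, b⟩, hc, hB⟩
      obtain ⟨h1, h2⟩ := sigma_eq' _ _ _ _ hc
      have hB' : (f b i * B₂ a i, B₁ b i) = x := hB
      have hpa : p s a = (eκ s).symm j := by
        rw [h1] at h2
        have h7 : eκ s (p s a) = j := Fin.ext h2
        rw [← h7, Equiv.symm_apply_apply]
      have hfm : f b i ∈ H s := by rw [← h1]; exact fmem b i
      have hmul : f b i * B₂ a i = x.1 := congrArg Prod.fst hB'
      refine ⟨⟨(f b i, a), hfm, hpa, hmul⟩, ?_⟩
      apply Subtype.ext
      have hbz : bf ⟨(f b i, a), hfm, hpa, hmul⟩ = b :=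
        (flabel s i x.2 (f b i) hfm).unique
          ⟨hbf1 _, hbf2 _, hbf3 _⟩ ⟨h1, congrArg Prod.snd hB', rfl⟩
      show (a, bf ⟨(f b i, a), hfm, hpa, hmul⟩) = (a, b)
      rw [hbz]
    exact (Nat.card_congr (Equiv.ofBijective Φ ⟨hinj, hsurj2⟩)).symm
  let ee : G × Fin n ≃ Fin (m * n) := Fintype.equivFinOfCardEq (by simp [hG])
  let eb : Fin ((m * n) ^ 2) ≃ Fin (m ^ 2) × Fin (n ^ 2) :=
    (Fintype.equivFinOfCardEq (by
      rw [Fintype.card_prod, Fintype.card_fin, Fintype.card_fin, ← mul_pow])).symm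
  exact ⟨fun q i => ee ((fun (ab : Fin (m ^ 2) × Fin (n ^ 2)) (i : Fin k) =>
      ((f ab.2 i * B₂ ab.1 i, B₁ ab.2 i) : G × Fin n)) (eb q) i),
    fun q => (fun ab => (⟨c₁ ab.2, eκ (c₁ ab.2) (p (c₁ ab.2) ab.1)⟩ :
      Σ v : Fin t, Fin (m * σ v / γ v))) (eb q),
    isTD_of_equiv eb ee htd, isResolution_of_equiv eb ee hres⟩
end
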